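/- Fix an integer r ≥ 3, a constant C > 0, and ε > 0. Then there exists d₀ such that for all d ≥ d₀ the following holds: if S₁,…,S_r ∈ {0,1}^d are such that every coordinate column (S₁(j),…,S_r(j)) lies in {0,1}^r ∖ {𝟘, 𝟙}, and for every t ∈ {0,1}^r ∖ {𝟘, 𝟙} the number of coordinates j ∈ [d] with (S₁(j),…,S_r(j)) = t differs from d/(2^r − 2) by at most C·√d, then there exists a closed affine halfspace U ⊆ ℝ^d whose bounding hyperplane contains all of S₁,…,S_r and such that |U ∩ {0,1}^d| ≤ 2^{(H_r + ε)·d}. -/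

import Mathlib

/-!
Take the weight of the `j`-th coordinate to be `log ((1 - p) / p)`, where `p` is the fraction of
the points `Sᵢ` with a one there, and let `c` be the average of the values `⟨a, Sᵢ⟩`. By the
exponential Markov inequality the halfspace `⟨a, x⟩ ≤ c` contains at most
`exp (c + ∑ⱼ log (1 + exp (-aⱼ)))` cube vertices, and for these weights the exponent is exactly
`∑ⱼ binEntropy pⱼ`, which the balance condition makes `(H_r + O(1/√d)) · d · log 2`.
The values `⟨a, Sᵢ⟩` themselves agree up to `O(√d)`, since for perfectly balanced columns they
are invariant under permuting the `Sᵢ`. So changing the weight of one column equal to the unit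
vector `eᵢ` by `O(√d)`, for each `i`, puts every `Sᵢ` on the hyperplane; as `x ↦ log (1 + exp (-x))`
is `1`-Lipschitz, this changes the bound by a factor `exp (O(√d))` only.
-/

open scoped BigOperators

/-- The binary entropy function `h(ξ) = ξ log₂(1/ξ) + (1-ξ) log₂(1/(1-ξ))`. -/
noncomputable def binEnt (x : ℝ) : ℝ :=
  x * Real.logb 2 x⁻¹ + (1 - x) * Real.logb 2 (1 - x)⁻¹

/-- `H_r = (1/(2^r-2)) ∑_{i=1}^{r-1} C(r,i) h(i/r)`. -/
noncomputable def Hent (r : ℕ) : ℝ :=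
  (1 / ((2 : ℝ) ^ r - 2)) * ∑ i ∈ Finset.Icc 1 (r - 1), (r.choose i : ℝ) * binEnt ((i : ℝ) / r)

/-- The 0/1-point of `ℝ^d` associated to a Boolean vector. -/
def bv {d : ℕ} (x : Fin d → Bool) : Fin d → ℝ := fun i => if x i then 1 else 0

namespace ShallowCut

open Finset Real

lemma log_one_add_exp_neg_le (x y : ℝ) :
    log (1 + exp (-y)) ≤ log (1 + exp (-x)) + |y - x| := by
  have hbound : 1 + exp (-y) ≤ exp |y - x| * (1 + exp (-x)) := by
    rw [mul_one_add, ← exp_add]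
    gcongr
    · exact one_le_exp (abs_nonneg _)
    · linarith [neg_abs_le (y - x)]
  calc log (1 + exp (-y)) ≤ log (exp |y - x| * (1 + exp (-x))) :=
        log_le_log (by positivity) hbound
    _ = log (1 + exp (-x)) + |y - x| := by
        rw [log_mul (exp_ne_zero _) (by positivity), log_exp, add_comm]

lemma mul_log_add_log_one_add_exp_neg_eq_binEntropy {p : ℝ} (hp₀ : 0 < p) (hp₁ : p < 1) :
    p * log ((1 - p) / p) + log (1 + exp (-log ((1 - p) / p))) = binEntropy p := by
  have h1p : 0 < 1 - p := by linarith
  rw [exp_neg, exp_log (by positivity), inv_div,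
    show 1 + p / (1 - p) = (1 - p)⁻¹ by field_simp; ring,
    log_div h1p.ne' hp₀.ne', binEntropy, log_inv, log_inv]
  ring

lemma binEnt_eq_binEntropy_div_log_two (p : ℝ) : binEnt p = binEntropy p / log 2 := by
  simp only [binEnt, binEntropy, logb]
  ring

lemma card_halfspace_le_exp {d : ℕ} (a : Fin d → ℝ) (c : ℝ) :
    (#{x : Fin d → Bool | ∑ j, a j * bv x j ≤ c} : ℝ) ≤
      exp (c + ∑ j, log (1 + exp (-a j))) := by
  have hmarkov : (#{x : Fin d → Bool | ∑ j, a j * bv x j ≤ c} : ℝ) ≤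
      ∑ x : Fin d → Bool, exp (c - ∑ j, a j * bv x j) := by
    rw [card_eq_sum_ones, Nat.cast_sum, Nat.cast_one, sum_filter]
    exact sum_le_sum fun x _ => by
      split_ifs with hx
      · exact one_le_exp (by linarith)
      · exact (exp_pos _).le
  have hfactor : ∀ x : Fin d → Bool,
      exp (c - ∑ j, a j * bv x j) = exp c * ∏ j, exp (-(a j * bv x j)) := by
    intro x
    rw [← exp_sum, ← exp_add, sum_neg_distrib, sub_eq_add_neg]
  calc _ ≤ _ := hmarkov
    _ = exp c * ∏ j, ∑ b : Bool, exp (-(a j * if b then 1 else 0)) := by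
        rw [Fintype.prod_sum, mul_sum]
        exact sum_congr rfl fun x _ => hfactor x
    _ = exp (c + ∑ j, log (1 + exp (-a j))) := by
        rw [exp_add, exp_sum]
        congr 1
        refine prod_congr rfl fun j _ => ?_
        rw [exp_log (by positivity), Fintype.sum_bool]
        simp [add_comm]

lemma exists_perturbation_mem_hyperplane {r d : ℕ} (S : Fin r → Fin d → Bool)
    (J : Fin r → Fin d) (hJ : ∀ i i', S i (J i') = decide (i = i')) (b : Fin d → ℝ) (c : ℝ) :
    ∃ a : Fin d → ℝ, (∀ i, ∑ j, a j * bv (S i) j = c) ∧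
      ∑ j, |a j - b j| ≤ ∑ i, |c - ∑ j, b j * bv (S i) j| := by
  set A : Fin r → ℝ := fun i => ∑ j, b j * bv (S i) j
  refine ⟨fun j => b j + ∑ i, if j = J i then c - A i else 0, fun i => ?_, ?_⟩
  · have hunit : ∀ i', bv (S i) (J i') = if i = i' then 1 else 0 := fun i' => by
      simp [bv, hJ]
    simp only [add_mul, sum_add_distrib, sum_mul, ite_mul, zero_mul]
    rw [sum_comm]
    simp [hunit, A]
  · simp only [add_sub_cancel_left]
    calc ∑ j, |∑ i, if j = J i then c - A i else 0|
        ≤ ∑ j, ∑ i, |if j = J i then c - A i else 0| :=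
          sum_le_sum fun j _ => abs_sum_le_sum_abs _ _
      _ = ∑ i, |c - A i| := by
          rw [sum_comm]
          simp [apply_ite abs]

lemma abs_sum_mul_sub_le {α : Type*} {s : Finset α} {n : α → ℝ} {m δ : ℝ}
    (h : ∀ t ∈ s, |n t - m| ≤ δ) (f : α → ℝ) :
    |∑ t ∈ s, n t * f t - m * ∑ t ∈ s, f t| ≤ δ * ∑ t ∈ s, |f t| := by
  rw [mul_sum, mul_sum, ← sum_sub_distrib]
  refine (abs_sum_le_sum_abs _ _).trans (sum_le_sum fun t ht => ?_)
  rw [← sub_mul, abs_mul]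
  exact mul_le_mul_of_nonneg_right (h t ht) (abs_nonneg _)

lemma abs_average_sub_le {ι : Type*} [Fintype ι] [Nonempty ι] {x : ι → ℝ} {m δ : ℝ}
    (h : ∀ i, |x i - m| ≤ δ) (i₀ : ι) :
    |(∑ i, x i) / Fintype.card ι - x i₀| ≤ 2 * δ := by
  have hcard : (0 : ℝ) < Fintype.card ι := by exact_mod_cast Fintype.card_pos
  have havg : |(∑ i, x i) / Fintype.card ι - m| ≤ δ := by
    rw [show (∑ i, x i) / Fintype.card ι - m = (∑ i, (x i - m)) / Fintype.card ι by
      rw [sum_sub_distrib, sum_const, card_univ, nsmul_eq_mul]; field_simp,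
      abs_div, abs_of_pos hcard, div_le_iff₀ hcard]
    calc |∑ i, (x i - m)| ≤ ∑ i, |x i - m| := abs_sum_le_sum_abs _ _
      _ ≤ ∑ _i : ι, δ := sum_le_sum fun i _ => h i
      _ = δ * Fintype.card ι := by rw [sum_const, card_univ, nsmul_eq_mul, mul_comm]
  calc _ ≤ |(∑ i, x i) / Fintype.card ι - m| + |m - x i₀| := abs_sub_le _ m _
    _ ≤ 2 * δ := by linarith [abs_sub_comm m (x i₀), h i₀]

section BoolVectors

variable {r : ℕ}

def weight (t : Fin r → Bool) : ℕ := #{i | t i}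

def nonconst (r : ℕ) : Finset (Fin r → Bool) :=
  {t | t ≠ (fun _ => false) ∧ t ≠ (fun _ => true)}

lemma mem_nonconst_iff {t : Fin r → Bool} : t ∈ nonconst r ↔ 0 < weight t ∧ weight t < r := by
  constructor
  · intro ht
    obtain ⟨⟨i, hi⟩, ⟨i', hi'⟩⟩ := (mem_filter.1 ht).2.imp Function.ne_iff.1 Function.ne_iff.1
    refine ⟨card_pos.2 ⟨i, by simpa using hi⟩, ?_⟩
    simpa [weight] using
      card_lt_univ_of_notMem (s := ({i | t i} : Finset (Fin r))) (x := i') (by simpa using hi')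
  · rintro ⟨hpos, hlt⟩
    refine mem_filter.2 ⟨mem_univ _, ?_, ?_⟩ <;> rintro rfl <;> simp [weight] at hpos hlt

lemma two_pow_sub_two_pos (hr : 2 ≤ r) : (0 : ℝ) < 2 ^ r - 2 := by
  have : (2 : ℝ) ^ 2 ≤ 2 ^ r := pow_le_pow_right₀ one_le_two hr
  linarith

lemma card_weight_eq (k : ℕ) : #{t : Fin r → Bool | weight t = k} = r.choose k := by
  conv_rhs => rw [← Fintype.card_fin r, ← card_univ, ← card_powersetCard]
  refine card_bij' (fun t _ => ({i | t i} : Finset (Fin r))) (fun s _ i => decide (i ∈ s))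
    ?_ ?_ ?_ ?_
  · intro t ht
    rw [mem_filter] at ht
    simpa [weight] using ht
  · intro s hs
    rw [mem_filter]
    simpa [weight] using hs
  · intro t _
    ext
    simp
  · intro s _
    ext
    simp

lemma sum_nonconst_comp_weight (g : ℕ → ℝ) :
    ∑ t ∈ nonconst r, g (weight t) = ∑ k ∈ Icc 1 (r - 1), (r.choose k : ℝ) * g k := by
  rw [← sum_fiberwise_of_maps_to (g := weight) (t := Icc 1 (r - 1)) fun t ht => by
    rw [mem_nonconst_iff] at ht; rw [mem_Icc]; omega]
  refine sum_congr rfl fun k hk => ?_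
  have hfiber : {t ∈ nonconst r | weight t = k} = ({t | weight t = k} : Finset (Fin r → Bool)) := by
    ext t
    simp only [mem_filter, mem_univ, true_and, mem_nonconst_iff, and_iff_right_iff_imp]
    rw [mem_Icc] at hk
    omega
  rw [hfiber, sum_congr rfl fun t ht => by rw [(mem_filter.1 ht).2], sum_const,
    card_weight_eq, nsmul_eq_mul]

lemma weight_comp_perm (t : Fin r → Bool) (σ : Equiv.Perm (Fin r)) :
    weight (t ∘ σ) = weight t :=
  card_equiv σ (by simp)

lemma sum_nonconst_weight_mul_bv_eq (g : ℕ → ℝ) (i i' : Fin r) :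
    ∑ t ∈ nonconst r, g (weight t) * bv t i = ∑ t ∈ nonconst r, g (weight t) * bv t i' := by
  set e := (Equiv.swap i i').arrowCongr (Equiv.refl Bool)
  have he : ∀ t, e t = t ∘ Equiv.swap i i' := fun t => rfl
  refine sum_equiv e (fun t => ?_) fun t _ => ?_
  · simp [mem_nonconst_iff, he, weight_comp_perm]
  · simp [he, weight_comp_perm, bv]

noncomputable def freq (t : Fin r → Bool) : ℝ := weight t / r

noncomputable def logRatio (t : Fin r → Bool) : ℝ := log ((1 - freq t) / freq t)

def unitVec (i : Fin r) : Fin r → Bool := fun i' => decide (i' = i)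

lemma freq_mem_Ioo {t : Fin r → Bool} (ht : t ∈ nonconst r) : freq t ∈ Set.Ioo 0 1 := by
  rw [mem_nonconst_iff] at ht
  have hr : (0 : ℝ) < r := by exact_mod_cast ht.1.trans ht.2
  refine ⟨by unfold freq; exact div_pos (by exact_mod_cast ht.1) hr, ?_⟩
  rw [freq, div_lt_one hr]
  exact_mod_cast ht.2

lemma sum_bv_eq_weight (t : Fin r → Bool) : ∑ i, bv t i = weight t := by
  simp [bv, weight]

lemma sum_nonconst_binEntropy_freq (hr : 2 ≤ r) :
    ∑ t ∈ nonconst r, binEntropy (freq t) = log 2 * Hent r * (2 ^ r - 2) := by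
  have hR := (two_pow_sub_two_pos hr).ne'
  calc ∑ t ∈ nonconst r, binEntropy (freq t)
      = ∑ k ∈ Icc 1 (r - 1), (r.choose k : ℝ) * binEntropy (k / r) :=
        sum_nonconst_comp_weight fun k => binEntropy (k / r)
    _ = log 2 * Hent r * (2 ^ r - 2) := by
        simp only [Hent, binEnt_eq_binEntropy_div_log_two, mul_div_assoc', ← sum_div]
        field_simp

lemma unitVec_mem_nonconst (hr : 2 ≤ r) (i : Fin r) : unitVec i ∈ nonconst r := by
  have hweight : weight (unitVec i) = 1 := by simp [weight, unitVec, filter_eq']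
  rw [mem_nonconst_iff, hweight]
  omega

end BoolVectors

section Columns

variable {r d : ℕ} (S : Fin r → Fin d → Bool)

def column (j : Fin d) : Fin r → Bool := fun i => S i j

lemma bv_column (i : Fin r) (j : Fin d) : bv (column S j) i = bv (S i) j := rfl

def colCount (t : Fin r → Bool) : ℕ := #{j | column S j = t}

lemma ncard_column_eq (t : Fin r → Bool) : {j | column S j = t}.ncard = colCount S t := by
  rw [Set.ncard_eq_toFinset_card', Set.toFinset_ofPred, colCount]

lemma sum_comp_column (hcol : ∀ j, column S j ∈ nonconst r) (f : (Fin r → Bool) → ℝ) :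
    ∑ j, f (column S j) = ∑ t ∈ nonconst r, (colCount S t : ℝ) * f t := by
  rw [← sum_fiberwise_of_maps_to fun j _ => hcol j]
  refine sum_congr rfl fun t _ => ?_
  rw [sum_congr rfl fun j hj => by rw [(mem_filter.1 hj).2], sum_const, nsmul_eq_mul, colCount]

lemma average_add_sum_log_one_add_exp_neg_eq (hcol : ∀ j, column S j ∈ nonconst r) :
    (∑ i, ∑ j, logRatio (column S j) * bv (S i) j) / r +
        ∑ j, log (1 + exp (-logRatio (column S j))) =
      ∑ j, binEntropy (freq (column S j)) := by
  have hc : (∑ i, ∑ j, logRatio (column S j) * bv (S i) j) / r =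
      ∑ j, freq (column S j) * logRatio (column S j) := by
    rw [sum_comm, sum_div]
    refine sum_congr rfl fun j _ => ?_
    simp only [← mul_sum, ← bv_column S, sum_bv_eq_weight, freq]
    ring
  rw [hc, ← sum_add_distrib]
  refine sum_congr rfl fun j _ => ?_
  obtain ⟨hp₀, hp₁⟩ := freq_mem_Ioo (hcol j)
  exact mul_log_add_log_one_add_exp_neg_eq_binEntropy hp₀ hp₁

lemma sum_binEntropy_freq_le (hr : 2 ≤ r) (hcol : ∀ j, column S j ∈ nonconst r) {δ : ℝ}
    (hbal : ∀ t ∈ nonconst r, |(colCount S t : ℝ) - d / (2 ^ r - 2)| ≤ δ) :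
    ∑ j, binEntropy (freq (column S j)) ≤ log 2 * Hent r * (d + δ * (2 ^ r - 2)) := by
  have hR := (two_pow_sub_two_pos hr).ne'
  have habs : ∑ t ∈ nonconst r, |binEntropy (freq t)| = ∑ t ∈ nonconst r, binEntropy (freq t) :=
    sum_congr rfl fun t ht =>
      abs_of_nonneg (binEntropy_nonneg (freq_mem_Ioo ht).1.le (freq_mem_Ioo ht).2.le)
  have hdev := (abs_le.1 (abs_sum_mul_sub_le hbal fun t => binEntropy (freq t))).2
  rw [habs, sum_nonconst_binEntropy_freq hr] at hdev
  rw [sum_comp_column S hcol fun t => binEntropy (freq t)]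
  calc _ ≤ d / (2 ^ r - 2) * (log 2 * Hent r * (2 ^ r - 2)) + δ * (log 2 * Hent r * (2 ^ r - 2)) :=
        by linarith
    _ = log 2 * Hent r * (d + δ * (2 ^ r - 2)) := by field_simp

lemma abs_average_sub_sum_logRatio_mul_le (hr : 0 < r) (hcol : ∀ j, column S j ∈ nonconst r)
    {δ : ℝ} (hδ : 0 ≤ δ) (hbal : ∀ t ∈ nonconst r, |(colCount S t : ℝ) - d / (2 ^ r - 2)| ≤ δ)
    (i : Fin r) :
    |(∑ i', ∑ j, logRatio (column S j) * bv (S i') j) / r -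
        ∑ j, logRatio (column S j) * bv (S i) j| ≤
      2 * (δ * ∑ t ∈ nonconst r, |logRatio t|) := by
  have : Nonempty (Fin r) := ⟨⟨0, hr⟩⟩
  set m := d / (2 ^ r - 2) * ∑ t ∈ nonconst r, logRatio t * bv t i
  have hclose : ∀ i', |∑ j, logRatio (column S j) * bv (S i') j - m| ≤
      δ * ∑ t ∈ nonconst r, |logRatio t| := by
    intro i'
    have hsym : m = d / (2 ^ r - 2) * ∑ t ∈ nonconst r, logRatio t * bv t i' :=
      congrArg _ (sum_nonconst_weight_mul_bv_eq (fun k => log ((1 - k / r) / (k / r))) i i')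
    simp only [← bv_column S]
    rw [hsym, sum_comp_column S hcol fun t => logRatio t * bv t i']
    refine (abs_sum_mul_sub_le hbal _).trans
      (mul_le_mul_of_nonneg_left (sum_le_sum fun t _ => ?_) hδ)
    rw [abs_mul]
    exact mul_le_of_le_one_right (abs_nonneg _) (by unfold bv; split_ifs <;> simp)
  simpa using abs_average_sub_le hclose i

theorem exists_halfspace_card_le_exp (hr : 2 ≤ r) (hcol : ∀ j, column S j ∈ nonconst r)
    {δ : ℝ} (hδ : 0 ≤ δ) (hbal : ∀ t ∈ nonconst r, |(colCount S t : ℝ) - d / (2 ^ r - 2)| ≤ δ)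
    (hδd : δ < d / (2 ^ r - 2)) :
    ∃ (a : Fin d → ℝ) (c : ℝ), (∀ i, ∑ j, a j * bv (S i) j = c) ∧
      (#{x : Fin d → Bool | ∑ j, a j * bv x j ≤ c} : ℝ) ≤
        exp (log 2 * Hent r * (d + δ * (2 ^ r - 2)) +
          r * (2 * (δ * ∑ t ∈ nonconst r, |logRatio t|))) := by
  set b : Fin d → ℝ := fun j => logRatio (column S j)
  set c := (∑ i, ∑ j, b j * bv (S i) j) / r
  have hunit : ∀ i, ∃ j, column S j = unitVec i := by
    intro i
    have hlow := (abs_le.1 (hbal _ (unitVec_mem_nonconst hr i))).1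
    have hpos : 0 < colCount S (unitVec i) := by
      exact_mod_cast (show (0 : ℝ) < colCount S (unitVec i) by linarith)
    obtain ⟨j, hj⟩ := card_pos.1 hpos
    exact ⟨j, (mem_filter.1 hj).2⟩
  choose J hJ using hunit
  obtain ⟨a, hplane, hclose⟩ :=
    exists_perturbation_mem_hyperplane S J (fun i i' => congrFun (hJ i') i) b c
  refine ⟨a, c, hplane, (card_halfspace_le_exp a c).trans (exp_le_exp.2 ?_)⟩
  have hlip : ∑ j, log (1 + exp (-a j)) ≤ ∑ j, log (1 + exp (-b j)) + ∑ j, |a j - b j| := by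
    rw [← sum_add_distrib]
    exact sum_le_sum fun j _ => log_one_add_exp_neg_le _ _
  have hplanes : ∑ i, |c - ∑ j, b j * bv (S i) j| ≤
      r * (2 * (δ * ∑ t ∈ nonconst r, |logRatio t|)) := by
    calc _ ≤ ∑ _i : Fin r, 2 * (δ * ∑ t ∈ nonconst r, |logRatio t|) :=
          sum_le_sum fun i _ => abs_average_sub_sum_logRatio_mul_le S (by omega) hcol hδ hbal i
      _ = _ := by simp
  have hentropy := average_add_sum_log_one_add_exp_neg_eq S hcol
  have hbound := sum_binEntropy_freq_le S hr hcol hbal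
  linarith

end Columns

end ShallowCut

open ShallowCut Finset Real Filter in
/-- Shallow cuts: if `S₁,…,S_r ∈ {0,1}^d` are spanning (every coordinate column is
nonconstant) and every nonconstant `t ∈ {0,1}^r` occurs as a column with multiplicity
within `C√d` of `d/(2^r-2)`, then for large `d` there is a closed affine halfspace
`{x | ∑ⱼ aⱼ xⱼ ≤ c}` whose bounding hyperplane contains all `Sᵢ` and which contains at
most `2^{(H_r+ε)d}` cube vertices. -/
theorem stmt18 (r : ℕ) (hr : 3 ≤ r) (C : ℝ) (hC : 0 < C) (ε : ℝ) (hε : 0 < ε) :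
    ∃ d₀ : ℕ, ∀ d : ℕ, d₀ ≤ d → ∀ S : Fin r → Fin d → Bool,
      (∀ j : Fin d,
        (fun i => S i j) ≠ (fun _ => false) ∧ (fun i => S i j) ≠ (fun _ => true)) →
      (∀ t : Fin r → Bool, t ≠ (fun _ => false) → t ≠ (fun _ => true) →
        |({j : Fin d | (fun i => S i j) = t}.ncard : ℝ) -
            (d : ℝ) / ((2 : ℝ) ^ r - 2)| ≤ C * Real.sqrt d) →
      ∃ (a : Fin d → ℝ) (c : ℝ),
        (∀ i : Fin r, ∑ j, a j * bv (S i) j = c) ∧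
        ({x : Fin d → Bool | (∑ j, a j * bv x j) ≤ c}.ncard : ℝ) ≤
          (2 : ℝ) ^ ((Hent r + ε) * (d : ℝ)) := by
  set R : ℝ := 2 ^ r - 2
  have hR : 0 < R := two_pow_sub_two_pos (by omega)
  set K := log 2 * Hent r * C * R + r * (2 * C * ∑ t ∈ nonconst r, |logRatio t|)
  obtain ⟨d₀, hd₀⟩ := eventually_atTop.1 <|
    (tendsto_sqrt_atTop.comp tendsto_natCast_atTop_atTop).eventually_gt_atTop
      (max (C * R) (K / (ε * log 2)))
  refine ⟨d₀, fun d hd S hcol hbal => ?_⟩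
  have hlarge : max (C * R) (K / (ε * log 2)) < √(d : ℝ) := hd₀ d hd
  obtain ⟨hCR, hK⟩ := max_lt_iff.1 hlarge
  have hsqrt : (d : ℝ) = √d * √d := (mul_self_sqrt d.cast_nonneg).symm
  have hsqrt_pos : 0 < √(d : ℝ) := (mul_pos hC hR).trans hCR
  have hδd : C * √d < d / R := by
    rw [lt_div_iff₀ hR]
    nlinarith [mul_lt_mul_of_pos_right hCR hsqrt_pos]
  obtain ⟨a, c, hplane, hcard⟩ := exists_halfspace_card_le_exp S (by omega)
    (fun j => mem_filter.2 ⟨mem_univ _, hcol j⟩) (by positivity)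
    (fun t ht => ncard_column_eq S t ▸ hbal t (mem_filter.1 ht).2.1 (mem_filter.1 ht).2.2) hδd
  refine ⟨a, c, hplane, ?_⟩
  rw [Set.ncard_eq_toFinset_card', Set.toFinset_ofPred, rpow_def_of_pos two_pos]
  refine hcard.trans (exp_le_exp.2 ?_)
  rw [div_lt_iff₀ (by positivity)] at hK
  calc _ = log 2 * Hent r * d + K * √d := by ring
    _ ≤ log 2 * Hent r * d + √d * (ε * log 2) * √d := by
        gcongr log 2 * Hent r * d + ?_ * √d
    _ = log 2 * ((Hent r + ε) * d) := by linear_combination (ε * log 2) * hsqrt.symm
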